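/- (Non-negativity) Let q > 0 and let k ∈ ℤ. Then for every i with 0 ≤ i ≤ n and every x ∈ [kπ/2, (k+1)π/2], the quantum trigonometric Bernstein basis function of degree n on [kπ/2, (k+1)π/2] satisfies B^n_i(x;q) ≥ 0. -/

import Mathlib

/-- `d(x,y;c) = ((c+1)/2)·sin(y−x) + ((c−1)/2)·sin(y+x)`. -/
noncomputable def dq (x y c : ℝ) : ℝ :=
  (c + 1) / 2 * Real.sin (y - x) + (c - 1) / 2 * Real.sin (y + x)

/-- The q-integer `[k]_q = 1 + q + ⋯ + q^{k−1}`. -/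
noncomputable def qInt (q : ℝ) (k : ℕ) : ℝ := ∑ i ∈ Finset.range k, q ^ i

/-- The q-factorial `[k]_q!`. -/
noncomputable def qFact (q : ℝ) : ℕ → ℝ
  | 0 => 1
  | k + 1 => qInt q (k + 1) * qFact q k

/-- The q-binomial coefficient `[n choose k]_q`. -/
noncomputable def qBinom (q : ℝ) (n k : ℕ) : ℝ :=
  qFact q n / (qFact q k * qFact q (n - k))

/-- Quantum trigonometric Bernstein basis function `B^n_k(x;q)` on `[a,b]`. -/
noncomputable def qBern (q a b : ℝ) (n k : ℕ) (x : ℝ) : ℝ :=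
  qBinom q n k *
    ((∏ i ∈ Finset.range k, dq a x (q ^ i)) * ∏ i ∈ Finset.range (n - k), dq x b (q ^ i)) /
    ∏ i ∈ Finset.range n, dq a b (q ^ i)

/-- A matrix is totally positive if all its minors are nonnegative. -/
def IsTotallyPositive {p r : ℕ} (M : Matrix (Fin p) (Fin r) ℝ) : Prop :=
  ∀ (k : ℕ) (f : Fin k → Fin p) (g : Fin k → Fin r),
    StrictMono f → StrictMono g → 0 ≤ (M.submatrix f g).det

/-- A system of functions is totally positive on `I` if all its collocation matrices at
increasing points of `I` are totally positive. -/
def IsTotallyPositiveSystem (I : Set ℝ) {n : ℕ} (φ : Fin n → ℝ → ℝ) : Prop :=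
  ∀ (m : ℕ) (x : Fin (m + 1) → ℝ), StrictMono x → (∀ j, x j ∈ I) →
    IsTotallyPositive (Matrix.of fun i j => φ i (x j))

/-- Number of sign changes between consecutive entries of a list. -/
noncomputable def signChanges : List ℝ → ℕ
  | [] => 0
  | [_] => 0
  | a :: b :: t => (if a * b < 0 then 1 else 0) + signChanges (b :: t)

/-- `S⁻(v)`: the number of strict sign changes of a finite real sequence, i.e. the number
of sign changes after deleting all zero entries. -/
noncomputable def strictSignChanges (v : List ℝ) : ℕ :=
  signChanges (v.filter fun x => x ≠ 0)

/-- Rational quantum trigonometric Bernstein basis function `R^n_k(x;q)` with weights `w`. -/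
noncomputable def rqBern (q a b : ℝ) (n : ℕ) (w : Fin (n + 1) → ℝ) (k : Fin (n + 1)) (x : ℝ) : ℝ :=
  w k * qBern q a b n k x / ∑ i : Fin (n + 1), w i * qBern q a b n i x

/- When `a` is a multiple of `π/2`, one of `sin a`, `cos a` vanishes, and then
`dq a y c = sin (y - a) * (c cos² a + sin² a)`, `dq x a c = sin (a - x) * (c sin² a + cos² a)`,
with positive second factors for `c > 0`. On `[kπ/2, (k+1)π/2]` the sines are nonnegative, and
positive for the denominator where the gap is `π/2`, so every factor of `B^n_i` has the
right sign. -/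

open Real Finset

lemma dq_eq_sin_mul_left {a : ℝ} (ha : sin a * cos a = 0) (y c : ℝ) :
    dq a y c = sin (y - a) * (c * cos a ^ 2 + sin a ^ 2) := by
  have hy : y + a = (y - a) + 2 * a := by ring
  rw [dq, hy, sin_add, sin_two_mul, cos_two_mul]
  linear_combination ((c - 1) * cos (y - a)) * ha - sin (y - a) * sin_sq_add_cos_sq a

lemma dq_eq_sin_mul_right {b : ℝ} (hb : sin b * cos b = 0) (x c : ℝ) :
    dq x b c = sin (b - x) * (c * sin b ^ 2 + cos b ^ 2) := by
  have hx : b + x = 2 * b - (b - x) := by ring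
  rw [dq, hx, sin_sub (2 * b), sin_two_mul, cos_two_mul]
  linear_combination ((c - 1) * cos (b - x)) * hb - c * sin (b - x) * sin_sq_add_cos_sq b

lemma mul_sq_add_sq_pos {c s t : ℝ} (hc : 0 < c) (h : s ^ 2 + t ^ 2 = 1) :
    0 < c * t ^ 2 + s ^ 2 := by
  rcases le_total c 1 with h1 | h1 <;> nlinarith [sq_nonneg s, sq_nonneg t]

lemma dq_nonneg_left {a y c : ℝ} (hc : 0 < c) (ha : sin a * cos a = 0)
    (hy : y ∈ Set.Icc a (a + π)) :
    0 ≤ dq a y c := by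
  rw [dq_eq_sin_mul_left ha]
  exact mul_nonneg (sin_nonneg_of_nonneg_of_le_pi (by linarith [hy.1]) (by linarith [hy.2]))
    (mul_sq_add_sq_pos hc (sin_sq_add_cos_sq a)).le

lemma dq_pos_left {a y c : ℝ} (hc : 0 < c) (ha : sin a * cos a = 0)
    (hy : y ∈ Set.Ioo a (a + π)) :
    0 < dq a y c := by
  rw [dq_eq_sin_mul_left ha]
  exact mul_pos (sin_pos_of_pos_of_lt_pi (by linarith [hy.1]) (by linarith [hy.2]))
    (mul_sq_add_sq_pos hc (sin_sq_add_cos_sq a))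

lemma dq_nonneg_right {b x c : ℝ} (hc : 0 < c) (hb : sin b * cos b = 0)
    (hx : x ∈ Set.Icc (b - π) b) :
    0 ≤ dq x b c := by
  rw [dq_eq_sin_mul_right hb]
  exact mul_nonneg (sin_nonneg_of_nonneg_of_le_pi (by linarith [hx.2]) (by linarith [hx.1]))
    (mul_sq_add_sq_pos hc (cos_sq_add_sin_sq b)).le

lemma sin_mul_cos_int_mul_pi_div_two (k : ℤ) : sin (k * π / 2) * cos (k * π / 2) = 0 := by
  have h : sin (2 * (k * π / 2)) = 0 := by
    rw [show 2 * ((k : ℝ) * π / 2) = k * π by ring]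
    exact sin_int_mul_pi k
  rw [sin_two_mul] at h
  linarith

lemma qFact_pos {q : ℝ} (hq : 0 < q) (m : ℕ) : 0 < qFact q m := by
  induction m with
  | zero => simp [qFact]
  | succ m ih =>
    exact mul_pos (sum_pos (fun i _ => pow_pos hq i) nonempty_range_add_one) ih

lemma qBinom_pos {q : ℝ} (hq : 0 < q) (n k : ℕ) : 0 < qBinom q n k :=
  div_pos (qFact_pos hq n) (mul_pos (qFact_pos hq k) (qFact_pos hq (n - k)))

theorem qBern_nonneg_general (n : ℕ) (q : ℝ) (hq : 0 < q) (k : ℤ) (i : ℕ) (x : ℝ)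
    (hx : x ∈ Set.Icc ((k : ℝ) * Real.pi / 2) (((k : ℝ) + 1) * Real.pi / 2)) :
    0 ≤ qBern q ((k : ℝ) * Real.pi / 2) (((k : ℝ) + 1) * Real.pi / 2) n i x := by
  set a : ℝ := k * π / 2
  set b : ℝ := (k + 1) * π / 2
  have hba : b = a + π / 2 := by ring
  have ha := sin_mul_cos_int_mul_pi_div_two k
  have hb : sin b * cos b = 0 := by
    simpa [b] using sin_mul_cos_int_mul_pi_div_two (k + 1)
  have hqj (j : ℕ) : 0 < q ^ j := pow_pos hq j
  have hleft (j : ℕ) : 0 ≤ dq a x (q ^ j) :=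
    dq_nonneg_left (hqj j) ha ⟨hx.1, by linarith [hx.2, pi_pos]⟩
  have hright (j : ℕ) : 0 ≤ dq x b (q ^ j) :=
    dq_nonneg_right (hqj j) hb ⟨by linarith [hx.1, pi_pos], hx.2⟩
  have hden (j : ℕ) : 0 < dq a b (q ^ j) :=
    dq_pos_left (hqj j) ha ⟨by linarith [pi_pos], by linarith [pi_pos]⟩
  exact div_nonneg
    (mul_nonneg (qBinom_pos hq n i).le
      (mul_nonneg (prod_nonneg fun j _ => hleft j) (prod_nonneg fun j _ => hright j)))
    (prod_pos fun j _ => hden j).le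

/-- Non-negativity: for `q > 0` and `k ∈ ℤ`, the quantum trigonometric Bernstein basis
functions are nonnegative on `[kπ/2, (k+1)π/2]`. -/
theorem qBern_nonneg (n : ℕ) (q : ℝ) (hq : 0 < q) (k : ℤ) (i : ℕ) (hi : i ≤ n) (x : ℝ)
    (hx : x ∈ Set.Icc ((k : ℝ) * Real.pi / 2) (((k : ℝ) + 1) * Real.pi / 2)) :
    0 ≤ qBern q ((k : ℝ) * Real.pi / 2) (((k : ℝ) + 1) * Real.pi / 2) n i x :=
  qBern_nonneg_general n q hq k i x hx
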